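/- Let $\omega$ be a non-negative function on primes, $\kappa \ge 1$, $L \ge 0$, $A_2 > 0$, and suppose that for all $2 \le w < z$ one has $-L \le \sum_{w \le p < z} \frac{\omega(p)\log p}{p} - \kappa \log\frac{z}{w} \le A_2$. Then for all $2 \le w < z$: $-\frac{L}{\log w} \le \sum_{w \le p < z} \frac{\omega(p)}{p} - \kappa \log\frac{\log z}{\log w} \le \frac{A_2}{\log w}$, where sums range over primes. -/

import Mathlib

open MeasureTheory Set

/-- The integrand `1/(t log² t)`. -/
noncomputable def hfun (t : ℝ) : ℝ := (t * (Real.log t)^2)⁻¹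

lemma hfun_contOn {a b : ℝ} (ha : 2 ≤ a) : ContinuousOn hfun (Set.Icc a b) := by
  apply ContinuousOn.inv₀
  · exact continuousOn_id.mul ((Real.continuousOn_log.mono (by
      intro t ht; simp only [Set.mem_compl_iff, Set.mem_singleton_iff]
      exact ne_of_gt (by have := ht.1; linarith))).pow 2)
  · intro t ht
    have h1 : (0:ℝ) < t := by have := ht.1; linarith
    have h2 : 0 < Real.log t := Real.log_pos (by have := ht.1; linarith)
    positivity

lemma hfun_intInt {a b : ℝ} (ha : 2 ≤ a) (hab : a ≤ b) :
    IntervalIntegrable hfun volume a b := by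
  apply ContinuousOn.intervalIntegrable
  rw [Set.uIcc_of_le hab]
  exact hfun_contOn ha

lemma hasDerivAt_neg_inv_log {t : ℝ} (ht : 2 ≤ t) :
    HasDerivAt (fun t => -(Real.log t)⁻¹) (hfun t) t := by
  have h0 : t ≠ 0 := by linarith
  have h2 : 0 < Real.log t := Real.log_pos (by linarith)
  have := ((Real.hasDerivAt_log h0).inv (ne_of_gt h2)).neg
  refine this.congr_deriv ?_
  unfold hfun
  field_simp

lemma int_hfun {a b : ℝ} (ha : 2 ≤ a) (hab : a ≤ b) :
    ∫ t in a..b, hfun t = (Real.log a)⁻¹ - (Real.log b)⁻¹ := by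
  rw [intervalIntegral.integral_eq_sub_of_hasDerivAt
    (fun t htt => hasDerivAt_neg_inv_log (by
      rw [Set.uIcc_of_le hab] at htt; exact le_trans ha htt.1))
    (hfun_intInt ha hab)]
  ring

lemma logmul_intInt {w b : ℝ} (hw : 2 ≤ w) (hwb : w ≤ b) :
    IntervalIntegrable (fun t => (Real.log t - Real.log w) * hfun t) volume w b := by
  apply ContinuousOn.intervalIntegrable
  rw [Set.uIcc_of_le hwb]
  refine ContinuousOn.mul ?_ (hfun_contOn hw)
  refine ContinuousOn.sub ?_ continuousOn_const
  exact Real.continuousOn_log.mono (by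
    intro t ht; simp only [Set.mem_compl_iff, Set.mem_singleton_iff]
    exact ne_of_gt (by have := ht.1; linarith))

lemma int_hfun2 {w b : ℝ} (hw : 2 ≤ w) (hwb : w ≤ b) :
    ∫ t in w..b, (Real.log t - Real.log w) * hfun t
      = (Real.log (Real.log b) + Real.log w * (Real.log b)⁻¹)
        - (Real.log (Real.log w) + 1) := by
  have key : ∀ t ∈ Set.uIcc w b, HasDerivAt
      (fun t => Real.log (Real.log t) + Real.log w * (Real.log t)⁻¹)
      ((Real.log t - Real.log w) * hfun t) t := by
    intro t htt
    rw [Set.uIcc_of_le hwb] at htt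
    have ht : 2 ≤ t := le_trans hw htt.1
    have h0 : t ≠ 0 := by linarith
    have h2 : 0 < Real.log t := Real.log_pos (by linarith)
    have d1 : HasDerivAt (fun t => Real.log (Real.log t)) ((Real.log t)⁻¹ * t⁻¹) t :=
      (Real.hasDerivAt_log (ne_of_gt h2)).comp t (Real.hasDerivAt_log h0)
    have d2 : HasDerivAt (fun t => Real.log w * (Real.log t)⁻¹)
        (Real.log w * (-(t⁻¹) / (Real.log t)^2)) t :=
      ((Real.hasDerivAt_log h0).inv (ne_of_gt h2)).const_mul _
    refine (d1.add d2).congr_deriv ?_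
    unfold hfun
    field_simp
    ring
  have hint := logmul_intInt hw hwb
  rw [intervalIntegral.integral_eq_sub_of_hasDerivAt key hint]
  have h2 : Real.log w ≠ 0 := ne_of_gt (Real.log_pos (by linarith))
  field_simp

lemma ind_intInt (p : ℕ) {a b : ℝ} (ha : 2 ≤ a) (hab : a ≤ b) :
    IntervalIntegrable (Set.indicator (Set.Ioi (p:ℝ)) hfun) volume a b := by
  have base := hfun_intInt ha hab
  rw [intervalIntegrable_iff] at base ⊢
  exact base.indicator measurableSet_Ioi

/-- The finite set of primes `p` with `w ≤ p < z`. -/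
noncomputable def primesIn (w z : ℝ) : Finset ℕ :=
  (Finset.range ⌈z⌉₊).filter (fun p => p.Prime ∧ w ≤ (p : ℝ) ∧ (p : ℝ) < z)

lemma mem_primesIn {w z : ℝ} {p : ℕ} :
    p ∈ primesIn w z ↔ p.Prime ∧ w ≤ (p:ℝ) ∧ (p:ℝ) < z := by
  unfold primesIn
  rw [Finset.mem_filter, Finset.mem_range]
  exact ⟨fun h => h.2, fun h => ⟨Nat.lt_ceil.mpr h.2.2, h⟩⟩

set_option maxHeartbeats 2000000 in
theorem stmt_8 (ω : ℕ → ℝ) (κ L A₂ : ℝ) (hκ : 1 ≤ κ) (hL : 0 ≤ L) (hA₂ : 0 < A₂)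
    (hω0 : ∀ p : ℕ, p.Prime → 0 ≤ ω p)
    (hΩ₂ : ∀ w z : ℝ, 2 ≤ w → w < z →
      -L ≤ (∑ p ∈ primesIn w z, ω p * Real.log p / p) - κ * Real.log (z / w) ∧
        (∑ p ∈ primesIn w z, ω p * Real.log p / p) - κ * Real.log (z / w) ≤ A₂) :
    ∀ w z : ℝ, 2 ≤ w → w < z →
      -(L / Real.log w) ≤
        (∑ p ∈ primesIn w z, ω p / p) - κ * Real.log (Real.log z / Real.log w) ∧
      (∑ p ∈ primesIn w z, ω p / p) - κ * Real.log (Real.log z / Real.log w) ≤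
        A₂ / Real.log w := by
  classical
  intro w z hw hwz
  have hwz' : w ≤ z := le_of_lt hwz
  have hlw : 0 < Real.log w := Real.log_pos (by linarith)
  have hlz : 0 < Real.log z := Real.log_pos (by linarith)
  have hmem : ∀ p ∈ primesIn w z, p.Prime ∧ w ≤ (p:ℝ) ∧ (p:ℝ) < z := fun p hp =>
    (Finset.mem_filter.mp hp).2
  -- Step A: rewrite the sum
  have hA : ∑ p ∈ primesIn w z, ω p / p
      = ∑ p ∈ primesIn w z, (ω p * Real.log p / p) * (Real.log p)⁻¹ := by
    refine Finset.sum_congr rfl fun p hp => ?_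
    obtain ⟨hpp, hwp, _⟩ := hmem p hp
    have hp2 : (2:ℝ) ≤ (p:ℝ) := le_trans hw hwp
    have hp0 : (p:ℝ) ≠ 0 := by linarith
    have hlp : Real.log (p:ℝ) ≠ 0 := ne_of_gt (Real.log_pos (by linarith))
    field_simp
  -- Step B+C: each term via integral
  have key1 : ∀ p ∈ primesIn w z, (ω p * Real.log p / p) * (Real.log p)⁻¹
      = (ω p * Real.log p / p) * (Real.log z)⁻¹
        + ∫ t in w..z, (ω p * Real.log p / p) * Set.indicator (Set.Ioi (p:ℝ)) hfun t := by
    intro p hp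
    obtain ⟨hpp, hwp, hpz⟩ := hmem p hp
    have hp2 : (2:ℝ) ≤ (p:ℝ) := le_trans hw hwp
    have hpz' : (p:ℝ) ≤ z := le_of_lt hpz
    have e1 : ∫ t in w..(p:ℝ), Set.indicator (Set.Ioi (p:ℝ)) hfun t = 0 := by
      rw [intervalIntegral.integral_congr (g := fun _ => (0:ℝ)) ?_]
      · simp
      · intro t ht
        rw [Set.uIcc_of_le hwp] at ht
        exact Set.indicator_of_notMem (by simpa using ht.2) _
    have e2 : ∫ t in (p:ℝ)..z, Set.indicator (Set.Ioi (p:ℝ)) hfun t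
        = ∫ t in (p:ℝ)..z, hfun t := by
      rw [intervalIntegral.integral_of_le hpz', intervalIntegral.integral_of_le hpz']
      refine setIntegral_congr_fun measurableSet_Ioc fun t ht => ?_
      exact Set.indicator_of_mem (Set.mem_Ioi.mpr ht.1) _
    have e3 : ∫ t in w..z, Set.indicator (Set.Ioi (p:ℝ)) hfun t
        = ∫ t in (p:ℝ)..z, hfun t := by
      rw [← intervalIntegral.integral_add_adjacent_intervals
        (ind_intInt p hw hwp) (ind_intInt p hp2 hpz'), e1, e2, zero_add]
    rw [intervalIntegral.integral_const_mul, e3, int_hfun hp2 hpz']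
    ring
  -- swap sum and integral
  have hswap : ∑ p ∈ primesIn w z, (ω p * Real.log p / p) * (Real.log p)⁻¹
      = (∑ p ∈ primesIn w z, ω p * Real.log p / p) * (Real.log z)⁻¹
        + ∫ t in w..z, ∑ p ∈ primesIn w z,
            (ω p * Real.log p / p) * Set.indicator (Set.Ioi (p:ℝ)) hfun t := by
    rw [Finset.sum_congr rfl key1, Finset.sum_add_distrib, ← Finset.sum_mul,
      ← intervalIntegral.integral_finset_sum
        (fun p _ => ((ind_intInt p hw hwz').const_mul (ω p * Real.log p / p)))]
  -- pointwise identity for the integrand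
  have hF_eq : ∀ t, t ≤ z →
      ∑ p ∈ primesIn w z, (ω p * Real.log p / p) * Set.indicator (Set.Ioi (p:ℝ)) hfun t
        = (∑ p ∈ primesIn w t, ω p * Real.log p / p) * hfun t := by
    intro t htz
    have step : ∀ p ∈ primesIn w z,
        (ω p * Real.log p / p) * Set.indicator (Set.Ioi (p:ℝ)) hfun t
          = if (p:ℝ) < t then (ω p * Real.log p / p) * hfun t else 0 := by
      intro p _
      by_cases h : (p:ℝ) < t
      · rw [if_pos h, Set.indicator_of_mem (Set.mem_Ioi.mpr h)]
      · rw [if_neg h, Set.indicator_of_notMem (by simpa using h), mul_zero]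
    have hset : (primesIn w z).filter (fun p : ℕ => (p:ℝ) < t) = primesIn w t := by
      ext p
      rw [Finset.mem_filter, mem_primesIn, mem_primesIn]
      constructor
      · rintro ⟨⟨hpp, hwp, _⟩, hpt⟩
        exact ⟨hpp, hwp, hpt⟩
      · rintro ⟨hpp, hwp, hpt⟩
        exact ⟨⟨hpp, hwp, lt_of_lt_of_le hpt htz⟩, hpt⟩
    rw [Finset.sum_congr rfl step, ← Finset.sum_filter, hset, ← Finset.sum_mul]
  -- bounds on partial sums
  have hgb : ∀ t, w ≤ t → t ≤ z →
      κ * (Real.log t - Real.log w) - L ≤ (∑ p ∈ primesIn w t, ω p * Real.log p / p)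
      ∧ (∑ p ∈ primesIn w t, ω p * Real.log p / p) ≤ κ * (Real.log t - Real.log w) + A₂ := by
    intro t hwt htz
    rcases eq_or_lt_of_le hwt with h | h
    · have hempty : primesIn w t = ∅ := by
        refine Finset.eq_empty_of_forall_notMem fun p hp => ?_
        have h2 := (Finset.mem_filter.mp hp).2
        rw [← h] at h2
        linarith [h2.2.1, h2.2.2]
      rw [hempty, Finset.sum_empty, ← h]
      constructor <;> simp <;> linarith
    · have hb := hΩ₂ w t hw h
      have hlog : Real.log (t / w) = Real.log t - Real.log w :=
        Real.log_div (by linarith) (by linarith)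
      rw [hlog] at hb
      exact ⟨by linarith [hb.1], by linarith [hb.2]⟩
  have hfpos : ∀ t ∈ Set.Icc w z, 0 ≤ hfun t := by
    intro t ht
    have h1 : (0:ℝ) < t := by have := ht.1; linarith
    unfold hfun
    positivity
  -- integrability facts
  have hFint : IntervalIntegrable (fun t => ∑ p ∈ primesIn w z,
      (ω p * Real.log p / p) * Set.indicator (Set.Ioi (p:ℝ)) hfun t) volume w z := by
    have h := IntervalIntegrable.sum (μ := volume) (a := w) (b := z) (primesIn w z)
      (f := fun p t => (ω p * Real.log p / p) * Set.indicator (Set.Ioi (p:ℝ)) hfun t)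
      (fun p _ => ((ind_intInt p hw hwz').const_mul _))
    rw [Finset.sum_fn] at h
    exact h
  have hlowint : IntervalIntegrable
      (fun t => (κ * (Real.log t - Real.log w) - L) * hfun t) volume w z := by
    have e : (fun t => (κ * (Real.log t - Real.log w) - L) * hfun t)
        = fun t => κ * ((Real.log t - Real.log w) * hfun t) - L * hfun t := by
      funext t; ring
    rw [e]
    exact ((logmul_intInt hw hwz').const_mul κ).sub ((hfun_intInt hw hwz').const_mul L)
  have hupint : IntervalIntegrable
      (fun t => (κ * (Real.log t - Real.log w) + A₂) * hfun t) volume w z := by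
    have e : (fun t => (κ * (Real.log t - Real.log w) + A₂) * hfun t)
        = fun t => κ * ((Real.log t - Real.log w) * hfun t) + A₂ * hfun t := by
      funext t; ring
    rw [e]
    exact ((logmul_intInt hw hwz').const_mul κ).add ((hfun_intInt hw hwz').const_mul A₂)
  -- integral comparisons
  have hIlow : ∫ t in w..z, (κ * (Real.log t - Real.log w) - L) * hfun t
      ≤ ∫ t in w..z, ∑ p ∈ primesIn w z,
          (ω p * Real.log p / p) * Set.indicator (Set.Ioi (p:ℝ)) hfun t := by
    refine intervalIntegral.integral_mono_on hwz' hlowint hFint fun t ht => ?_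
    rw [hF_eq t ht.2]
    exact mul_le_mul_of_nonneg_right (hgb t ht.1 ht.2).1 (hfpos t ht)
  have hIup : (∫ t in w..z, ∑ p ∈ primesIn w z,
          (ω p * Real.log p / p) * Set.indicator (Set.Ioi (p:ℝ)) hfun t)
      ≤ ∫ t in w..z, (κ * (Real.log t - Real.log w) + A₂) * hfun t := by
    refine intervalIntegral.integral_mono_on hwz' hFint hupint fun t ht => ?_
    rw [hF_eq t ht.2]
    exact mul_le_mul_of_nonneg_right (hgb t ht.1 ht.2).2 (hfpos t ht)
  -- values of the bound integrals
  have hIlowval : ∫ t in w..z, (κ * (Real.log t - Real.log w) - L) * hfun t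
      = κ * ((Real.log (Real.log z) + Real.log w * (Real.log z)⁻¹)
          - (Real.log (Real.log w) + 1)) - L * ((Real.log w)⁻¹ - (Real.log z)⁻¹) := by
    have e : (fun t => (κ * (Real.log t - Real.log w) - L) * hfun t)
        = fun t => κ * ((Real.log t - Real.log w) * hfun t) - L * hfun t := by
      funext t; ring
    rw [e, intervalIntegral.integral_sub ((logmul_intInt hw hwz').const_mul κ)
        ((hfun_intInt hw hwz').const_mul L),
      intervalIntegral.integral_const_mul, intervalIntegral.integral_const_mul,
      int_hfun2 hw hwz', int_hfun hw hwz']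
  have hIupval : ∫ t in w..z, (κ * (Real.log t - Real.log w) + A₂) * hfun t
      = κ * ((Real.log (Real.log z) + Real.log w * (Real.log z)⁻¹)
          - (Real.log (Real.log w) + 1)) + A₂ * ((Real.log w)⁻¹ - (Real.log z)⁻¹) := by
    have e : (fun t => (κ * (Real.log t - Real.log w) + A₂) * hfun t)
        = fun t => κ * ((Real.log t - Real.log w) * hfun t) + A₂ * hfun t := by
      funext t; ring
    rw [e, intervalIntegral.integral_add ((logmul_intInt hw hwz').const_mul κ)
        ((hfun_intInt hw hwz').const_mul A₂),
      intervalIntegral.integral_const_mul, intervalIntegral.integral_const_mul,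
      int_hfun2 hw hwz', int_hfun hw hwz']
  -- final assembly
  have hT : ∑ p ∈ primesIn w z, ω p / p
      = (∑ p ∈ primesIn w z, ω p * Real.log p / p) * (Real.log z)⁻¹
        + ∫ t in w..z, ∑ p ∈ primesIn w z,
            (ω p * Real.log p / p) * Set.indicator (Set.Ioi (p:ℝ)) hfun t :=
    hA.trans hswap
  have hlogdiv : Real.log (Real.log z / Real.log w)
      = Real.log (Real.log z) - Real.log (Real.log w) :=
    Real.log_div (ne_of_gt hlz) (ne_of_gt hlw)
  have hPz := hgb z hwz' le_rfl
  have hlzinv : (0:ℝ) ≤ (Real.log z)⁻¹ := by positivity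
  have hlwne : Real.log w ≠ 0 := ne_of_gt hlw
  have hlzne : Real.log z ≠ 0 := ne_of_gt hlz
  constructor
  · have h1 : (κ * (Real.log z - Real.log w) - L) * (Real.log z)⁻¹
        ≤ (∑ p ∈ primesIn w z, ω p * Real.log p / p) * (Real.log z)⁻¹ :=
      mul_le_mul_of_nonneg_right hPz.1 hlzinv
    have h2 := hIlow
    rw [hIlowval] at h2
    have key : (κ * (Real.log z - Real.log w) - L) * (Real.log z)⁻¹
        + (κ * ((Real.log (Real.log z) + Real.log w * (Real.log z)⁻¹)
            - (Real.log (Real.log w) + 1)) - L * ((Real.log w)⁻¹ - (Real.log z)⁻¹))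
        = κ * (Real.log (Real.log z) - Real.log (Real.log w)) - L / Real.log w := by
      field_simp
      ring
    rw [hT, hlogdiv]
    linarith
  · have h1 : (∑ p ∈ primesIn w z, ω p * Real.log p / p) * (Real.log z)⁻¹
        ≤ (κ * (Real.log z - Real.log w) + A₂) * (Real.log z)⁻¹ :=
      mul_le_mul_of_nonneg_right hPz.2 hlzinv
    have h2 := hIup
    rw [hIupval] at h2
    have key : (κ * (Real.log z - Real.log w) + A₂) * (Real.log z)⁻¹
        + (κ * ((Real.log (Real.log z) + Real.log w * (Real.log z)⁻¹)
            - (Real.log (Real.log w) + 1)) + A₂ * ((Real.log w)⁻¹ - (Real.log z)⁻¹))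
        = κ * (Real.log (Real.log z) - Real.log (Real.log w)) + A₂ / Real.log w := by
      field_simp
      ring
    rw [hT, hlogdiv]
    linarith
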